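/- arXiv:2205.04879 — 2 statements merged into one kernel-verified Lean document; each statement's English description precedes it below -/
import Mathlib

section
/- Let k be a positive integer and F a finite nonnegative Borel measure on [0,∞) with ∫_0^∞ r² dF(r) < ∞. Define f(t) = ∫_0^∞ Ω_k(tr) dF(r). Then f is twice differentiable at 0 with f''(0) = -(1/k) ∫_0^∞ r² dF(r), and for t > 0, f'(t) = -(t/k) ∫_0^∞ r² Ω_{k+2}(tr) dF(r). -/
/-!
For `u ≥ 0` we have `Ω_k(u) = W_{k/2}(u)`, where
`W_ν(u) = ∑ₘ (-1)ᵐ Γ(ν) / (m! Γ(m+ν)) (u/2)^{2m}` is entire and even. The recurrences of its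
coefficients give `W_ν' = -(u/(2ν)) W_{ν+1}` and Bessel's equation in the form
`W_{ν+1} - W_ν = u²/(4ν(ν+1)) W_{ν+2}`. For `ν ≥ 1/2` the latter makes the energy
`W_ν² + W_ν'²` nonincreasing on `[0, ∞)`, whence `|W_ν| ≤ 1`. With this bound `r² ∈ L¹(F)`
dominates the `s`-derivative `-(s/k) r² W_{k/2+1}(sr)` of the integrand, which gives `f'`.
Then `f'(0) = 0` and `f'(t)/t = -(1/k) ∫ r² W_{k/2+1}(tr) dF` is continuous in `t`, which
gives `f''(0)`.
-/

open MeasureTheory Filter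

noncomputable section

/-- Bessel function of the first kind of order `nu`. -/
def besselJ (nu : ℝ) (t : ℝ) : ℝ :=
  (t / 2) ^ nu *
    ∑' m : ℕ, ((-1 : ℝ) ^ m / (m.factorial * Real.Gamma (m + nu + 1))) * (t / 2) ^ (2 * m)

/-- `Omega k t = Γ(k/2) (2/t)^{(k-2)/2} J_{(k-2)/2}(t)` for `t ≠ 0`, and `Omega k 0 = 1`. -/
def Omega (k : ℕ) (t : ℝ) : ℝ :=
  if t = 0 then 1
  else Real.Gamma ((k : ℝ) / 2) * (2 / t) ^ ((k : ℝ) / 2 - 1) * besselJ ((k : ℝ) / 2 - 1) t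

open FormalMultilinearSeries Set
open scoped Nat

theorem hasDerivAt_ofScalarsSum {c : ℕ → ℝ} (hc : (ofScalars ℝ c).radius = ⊤) (x : ℝ) :
    HasDerivAt (ofScalarsSum c) (∑' n, (n + 1) * c (n + 1) * x ^ n) x := by
  have hx : ‖x‖ₑ < (ofScalars ℝ c).radius := by simp [hc]
  have hsum := (ofScalars ℝ c).derivSeries.hasSum
    (x := x) (by simpa using hx.trans_le (ofScalars ℝ c).radius_le_radius_derivSeries)
  refine ((ofScalars ℝ c).hasFDerivAt_sum hx).hasDerivAt.congr_deriv ?_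
  refine (hsum.mapL (ContinuousLinearMap.apply ℝ ℝ 1)).tsum_eq.symm.trans
    (tsum_congr fun n => ?_)
  simp only [apply_eq_pow_smul_coeff, map_smul, ContinuousLinearMap.apply_apply,
    derivSeries_coeff_one, coeff_ofScalars, nsmul_eq_mul, Nat.cast_add, Nat.cast_one, smul_eq_mul]
  ring

theorem hasDerivAt_mul_of_continuousAt_zero {g : ℝ → ℝ} (hg : ContinuousAt g 0) :
    HasDerivAt (fun t => t * g t) (g 0) 0 := by
  rw [hasDerivAt_iff_tendsto_slope_zero]
  refine (hg.tendsto.mono_left nhdsWithin_le_nhds).congr' ?_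
  filter_upwards [self_mem_nhdsWithin] with t ht
  simp [inv_mul_cancel_left₀ (show t ≠ 0 from ht)]

section ParametricIntegral

variable {F : Measure ℝ} {w v : ℝ → ℝ} {B C c : ℝ}

theorem hasDerivAt_integral_comp_mul [IsFiniteMeasure F]
    (hw : ∀ u, HasDerivAt w (-(u / c) * v u) u) (hwB : ∀ u, |w u| ≤ B) (hv : Continuous v)
    (hvC : ∀ u, |v u| ≤ C) (hr2 : Integrable (fun r => r ^ 2) F) (t : ℝ) :
    HasDerivAt (fun s => ∫ r, w (s * r) ∂F) (-(t / c) * ∫ r, r ^ 2 * v (t * r) ∂F) t := by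
  have hwc : Continuous w := continuous_iff_continuousAt.2 fun u => (hw u).continuousAt
  have hmeas : ∀ s, AEStronglyMeasurable (fun r => w (s * r)) F := fun s =>
    (hwc.comp (continuous_const_mul s)).aestronglyMeasurable
  have hbound : ∀ᵐ r ∂F, ∀ s ∈ Metric.ball t 1,
      ‖-(s / c) * (r ^ 2 * v (s * r))‖ ≤ (|t| + 1) / |c| * C * r ^ 2 := by
    refine .of_forall fun r s hst => ?_
    have hs : |s| ≤ |t| + 1 := by
      have := abs_sub_abs_le_abs_sub s t
      rw [Metric.mem_ball, Real.dist_eq] at hst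
      linarith
    rw [Real.norm_eq_abs, abs_mul, abs_neg, abs_div, abs_mul, abs_of_nonneg (sq_nonneg r)]
    have hvs := hvC (s * r)
    have hC : 0 ≤ C := (abs_nonneg _).trans hvs
    calc |s| / |c| * (r ^ 2 * |v (s * r)|) ≤ (|t| + 1) / |c| * (r ^ 2 * C) := by gcongr
      _ = _ := by ring
  have hderiv : ∀ᵐ r ∂F, ∀ s ∈ Metric.ball t 1,
      HasDerivAt (fun s => w (s * r)) (-(s / c) * (r ^ 2 * v (s * r))) s :=
    .of_forall fun r s _ => ((hw (s * r)).comp s (hasDerivAt_mul_const r)).congr_deriv (by ring)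
  have key := hasDerivAt_integral_of_dominated_loc_of_deriv_le (Metric.ball_mem_nhds t one_pos)
    (.of_forall hmeas) (.of_bound (hmeas t) B (.of_forall fun r => hwB (t * r)))
    (by fun_prop : Continuous fun r => -(t / c) * (r ^ 2 * v (t * r))).aestronglyMeasurable hbound
    (hr2.const_mul _) hderiv
  rw [integral_const_mul] at key
  exact key.2

theorem continuous_integral_sq_mul_comp_mul (hv : Continuous v) (hvC : ∀ u, |v u| ≤ C)
    (hr2 : Integrable (fun r => r ^ 2) F) : Continuous fun t => ∫ r, r ^ 2 * v (t * r) ∂F := by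
  refine continuous_of_dominated (bound := fun r => C * r ^ 2)
    (fun t => (by fun_prop : Continuous fun r => r ^ 2 * v (t * r)).aestronglyMeasurable)
    (fun t => .of_forall fun r => ?_) (hr2.const_mul C) (.of_forall fun r => by fun_prop)
  rw [Real.norm_eq_abs, abs_mul, abs_of_nonneg (sq_nonneg r), mul_comm]
  exact mul_le_mul_of_nonneg_right (hvC _) (sq_nonneg r)

theorem hasDerivAt_neg_div_mul_integral_sq_mul_comp_mul (hv : Continuous v)
    (hvC : ∀ u, |v u| ≤ C) (hr2 : Integrable (fun r => r ^ 2) F) :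
    HasDerivAt (fun t => -(t / c) * ∫ r, r ^ 2 * v (t * r) ∂F)
      (-(1 / c) * ∫ r, r ^ 2 * v 0 ∂F) 0 := by
  have h := hasDerivAt_mul_of_continuousAt_zero
    ((continuous_integral_sq_mul_comp_mul hv hvC hr2).const_mul (-(1 / c))).continuousAt
  simp only [zero_mul] at h
  exact h.congr_of_eventuallyEq (.of_forall fun t => by ring)

end ParametricIntegral

/-- `Ω_{2ν}(u) = ∑ₘ omegaCoeff ν m * u^(2m)`, by the series of `J_{ν-1}`. -/
def omegaCoeff (ν : ℝ) (m : ℕ) : ℝ :=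
  (-1) ^ m * Real.Gamma ν / (m ! * Real.Gamma (m + ν) * 4 ^ m)

section BesselSeries

variable {ν : ℝ}

theorem omegaCoeff_zero (hν : 0 < ν) : omegaCoeff ν 0 = 1 := by
  simp [omegaCoeff, (Real.Gamma_pos_of_pos hν).ne']

theorem omegaCoeff_succ (hν : 0 < ν) (n : ℕ) :
    omegaCoeff ν (n + 1) = -omegaCoeff ν n / (4 * (n + 1) * (n + ν)) := by
  have hn : (0 : ℝ) < n + ν := by positivity
  have := (Real.Gamma_pos_of_pos hn).ne'
  simp only [omegaCoeff, Nat.cast_add, Nat.cast_one, add_right_comm _ (1 : ℝ) ν,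
    Real.Gamma_add_one hn.ne', Nat.factorial_succ, Nat.cast_mul, pow_succ]
  field_simp

theorem omegaCoeff_ne_zero (hν : 0 < ν) (n : ℕ) : omegaCoeff ν n ≠ 0 := by
  have := (Real.Gamma_pos_of_pos hν).ne'
  have := (Real.Gamma_pos_of_pos (by positivity : (0 : ℝ) < n + ν)).ne'
  simp only [omegaCoeff]
  positivity

theorem radius_ofScalars_omegaCoeff (hν : 0 < ν) : (ofScalars ℝ (omegaCoeff ν)).radius = ⊤ := by
  refine ofScalars_radius_eq_top_of_tendsto _ _ (.of_forall (omegaCoeff_ne_zero hν)) ?_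
  have hden : Tendsto (fun n : ℕ => 4 * ((n : ℝ) + 1) * (n + ν)) atTop atTop :=
    ((tendsto_natCast_atTop_atTop.atTop_add tendsto_const_nhds).const_mul_atTop
      (by norm_num : (0 : ℝ) < 4)).atTop_mul_atTop₀
      (tendsto_natCast_atTop_atTop.atTop_add tendsto_const_nhds)
  refine hden.inv_tendsto_atTop.congr fun n => ?_
  have hpos : (0 : ℝ) ≤ 4 * (n + 1) * (n + ν) := by positivity
  rw [Pi.inv_apply, omegaCoeff_succ hν, norm_div, norm_neg, Real.norm_of_nonneg hpos,
    div_div_cancel_left' (norm_ne_zero_iff.2 (omegaCoeff_ne_zero hν n))]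

theorem succ_mul_omegaCoeff_succ (hν : 0 < ν) (n : ℕ) :
    (n + 1) * omegaCoeff ν (n + 1) = -omegaCoeff (ν + 1) n / (4 * ν) := by
  have hn : (0 : ℝ) < n + ν := by positivity
  have := (Real.Gamma_pos_of_pos hn).ne'
  rw [omegaCoeff_succ hν]
  simp only [omegaCoeff, ← add_assoc, Real.Gamma_add_one hn.ne', Real.Gamma_add_one hν.ne']
  field_simp

theorem omegaCoeff_add_one_sub_omegaCoeff (hν : 0 < ν) (n : ℕ) :
    omegaCoeff (ν + 1) (n + 1) - omegaCoeff ν (n + 1) =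
      omegaCoeff (ν + 2) n / (4 * ν * (ν + 1)) := by
  have hn : (0 : ℝ) < n + ν := by positivity
  have hG := (Real.Gamma_pos_of_pos hn).ne'
  have hGν := (Real.Gamma_pos_of_pos hν).ne'
  have hΓ₁ : Real.Gamma (n + 1 + ν) = (n + ν) * Real.Gamma (n + ν) := by
    rw [add_right_comm, Real.Gamma_add_one hn.ne']
  have hΓ₂ : Real.Gamma (n + 1 + (ν + 1)) = (n + ν + 1) * ((n + ν) * Real.Gamma (n + ν)) := by
    rw [show (n : ℝ) + 1 + (ν + 1) = n + ν + 1 + 1 by ring, Real.Gamma_add_one (by positivity),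
      Real.Gamma_add_one hn.ne']
  have hΓ₃ : Real.Gamma (n + (ν + 2)) = (n + ν + 1) * ((n + ν) * Real.Gamma (n + ν)) := by
    rw [← hΓ₂]; ring_nf
  have hΓ₄ : Real.Gamma (ν + 2) = (ν + 1) * (ν * Real.Gamma ν) := by
    rw [show ν + 2 = ν + 1 + 1 by ring, Real.Gamma_add_one (by positivity),
      Real.Gamma_add_one hν.ne']
  simp only [omegaCoeff, Nat.factorial_succ, Nat.cast_mul, Nat.cast_add, Nat.cast_one, pow_succ,
    hΓ₁, hΓ₂, hΓ₃, hΓ₄, Real.Gamma_add_one hν.ne']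
  field_simp
  ring

/-- `evenOmega ν` agrees with `Ω_{2ν}` on `[0, ∞)` (`Omega_eq_evenOmega`), where `Omega` takes
junk values off that half-line (`rpow` of a negative base). -/
def evenOmega (ν u : ℝ) : ℝ := ofScalarsSum (omegaCoeff ν) (u ^ 2)

theorem hasSum_evenOmega (hν : 0 < ν) (u : ℝ) :
    HasSum (fun m => omegaCoeff ν m * (u ^ 2) ^ m) (evenOmega ν u) := by
  simpa [ofScalars_apply_eq, evenOmega, ofScalarsSum, mul_comm] using
    (ofScalars ℝ (omegaCoeff ν)).hasSum (x := u ^ 2) (by simp [radius_ofScalars_omegaCoeff hν])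

theorem evenOmega_zero (hν : 0 < ν) : evenOmega ν 0 = 1 := by
  simp [evenOmega, ofScalarsSum_zero, omegaCoeff_zero hν]

theorem hasDerivAt_evenOmega (hν : 0 < ν) (u : ℝ) :
    HasDerivAt (evenOmega ν) (-(u / (2 * ν)) * evenOmega (ν + 1) u) u := by
  have hseries : ∑' n : ℕ, (n + 1) * omegaCoeff ν (n + 1) * (u ^ 2) ^ n =
      -(evenOmega (ν + 1) u / (4 * ν)) := by
    simp_rw [succ_mul_omegaCoeff_succ hν, neg_div, neg_mul, div_mul_eq_mul_div, tsum_neg,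
      tsum_div_const, evenOmega, ofScalars_sum_eq, smul_eq_mul]
  have h := (hasDerivAt_ofScalarsSum (radius_ofScalars_omegaCoeff hν) (u ^ 2)).comp u
    (hasDerivAt_pow 2 u)
  rw [hseries] at h
  exact h.congr_deriv (by push_cast; field_simp; ring)

theorem continuous_evenOmega (hν : 0 < ν) : Continuous (evenOmega ν) :=
  continuous_iff_continuousAt.2 fun u => (hasDerivAt_evenOmega hν u).continuousAt

theorem evenOmega_add_one_sub_evenOmega (hν : 0 < ν) (u : ℝ) :
    evenOmega (ν + 1) u - evenOmega ν u = u ^ 2 / (4 * ν * (ν + 1)) * evenOmega (ν + 2) u := by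
  have hdiff := (hasSum_evenOmega (by positivity : 0 < ν + 1) u).sub (hasSum_evenOmega hν u)
  rw [← hasSum_nat_add_iff' 1] at hdiff
  have hshift := ((hasSum_evenOmega (by positivity : 0 < ν + 2) u).mul_left
    (u ^ 2 / (4 * ν * (ν + 1))))
  have := hdiff.unique (hshift.congr_fun fun n => ?_)
  · simp only [Finset.range_one, Finset.sum_singleton, omegaCoeff_zero hν,
      omegaCoeff_zero (by positivity : 0 < ν + 1), pow_zero, mul_one, sub_self, sub_zero] at this
    linarith
  · simp only [← sub_mul, omegaCoeff_add_one_sub_omegaCoeff hν, pow_succ]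
    ring

/-- `W² + W'²` for `W = evenOmega ν`, by `hasDerivAt_evenOmega`. -/
def omegaEnergy (ν u : ℝ) : ℝ := evenOmega ν u ^ 2 + (u / (2 * ν) * evenOmega (ν + 1) u) ^ 2

theorem hasDerivAt_omegaEnergy (hν : 0 < ν) (u : ℝ) :
    HasDerivAt (omegaEnergy ν) (-(u / ν) * (1 - 1 / (2 * ν)) * evenOmega (ν + 1) u ^ 2) u := by
  have h := ((hasDerivAt_evenOmega hν u).fun_pow 2).fun_add
    ((((hasDerivAt_id' u).div_const (2 * ν)).fun_mul
      (hasDerivAt_evenOmega (ν := ν + 1) (by positivity) u)).fun_pow 2)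
  refine h.congr_deriv ?_
  rw [← sub_sub_cancel (evenOmega (ν + 1) u) (evenOmega ν u),
    evenOmega_add_one_sub_evenOmega hν u, show ν + 1 + 1 = ν + 2 by ring]
  push_cast
  field_simp
  ring

theorem abs_evenOmega_le_one (hν : 1 / 2 ≤ ν) (u : ℝ) : |evenOmega ν u| ≤ 1 := by
  have hν₀ : 0 < ν := by linarith
  wlog hu : 0 ≤ u generalizing u
  · simpa [evenOmega] using this (-u) (by linarith)
  have hE : AntitoneOn (omegaEnergy ν) (Ici 0) := by
    refine antitoneOn_of_hasDerivWithinAt_nonpos (convex_Ici 0)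
      (fun u _ => (hasDerivAt_omegaEnergy hν₀ u).continuousAt.continuousWithinAt)
      (fun u _ => (hasDerivAt_omegaEnergy hν₀ u).hasDerivWithinAt) fun u hu => ?_
    have hcoeff : 0 ≤ 1 - 1 / (2 * ν) := by rw [sub_nonneg, div_le_one (by positivity)]; linarith
    rw [interior_Ici] at hu
    have := mul_nonneg (mul_nonneg (div_pos hu hν₀).le hcoeff) (sq_nonneg (evenOmega (ν + 1) u))
    linarith
  have h := hE self_mem_Ici hu hu
  simp only [omegaEnergy, evenOmega_zero hν₀, zero_div, zero_mul] at h
  rw [← sq_le_one_iff_abs_le_one]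
  nlinarith

end BesselSeries

theorem Omega_eq_evenOmega {k : ℕ} (hk : 0 < k) {u : ℝ} (hu : 0 ≤ u) :
    Omega k u = evenOmega (k / 2) u := by
  have hν : (0 : ℝ) < k / 2 := by positivity
  rcases hu.eq_or_lt with rfl | hu
  · simp [Omega, evenOmega_zero hν]
  have hpow : (2 / u) ^ ((k : ℝ) / 2 - 1) * (u / 2) ^ ((k : ℝ) / 2 - 1) = 1 := by
    rw [← Real.mul_rpow (by positivity) (by positivity), show 2 / u * (u / 2) = 1 by field_simp,
      Real.one_rpow]
  rw [Omega, if_neg hu.ne', besselJ, ← (hasSum_evenOmega hν u).tsum_eq, mul_assoc,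
    ← mul_assoc _ ((u / 2) ^ _), hpow, one_mul, ← tsum_mul_left]
  refine tsum_congr fun m => ?_
  rw [omegaCoeff, show (m : ℝ) + ((k : ℝ) / 2 - 1) + 1 = m + k / 2 by ring, pow_mul, div_pow,
    div_pow (u ^ 2)]
  norm_num
  field_simp

theorem integral_Omega_comp_mul_eq {F : Measure ℝ} (hF : ∀ᵐ r ∂F, 0 ≤ r) (g : ℝ → ℝ) {k : ℕ}
    (hk : 0 < k) {s : ℝ} (hs : 0 ≤ s) :
    ∫ r, g r * Omega k (s * r) ∂F = ∫ r, g r * evenOmega (k / 2) (s * r) ∂F :=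
  integral_congr_ae <| hF.mono fun r hr => by
    simp only [Omega_eq_evenOmega hk (mul_nonneg hs hr)]

theorem schoenberg_derivatives (k : ℕ) (hk : 1 ≤ k) (F : Measure ℝ) [IsFiniteMeasure F]
    (hsupp : F (Set.Iio 0) = 0) (hr2 : Integrable (fun r => r ^ 2) F) :
    (∀ t, 0 < t → HasDerivAt (fun s => ∫ r, Omega k (s * r) ∂F)
        (-(t / (k : ℝ)) * ∫ r, r ^ 2 * Omega (k + 2) (t * r) ∂F) t) ∧
    HasDerivWithinAt
        (fun t => derivWithin (fun s => ∫ r, Omega k (s * r) ∂F) (Set.Ici 0) t)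
        (-(1 / (k : ℝ)) * ∫ r, r ^ 2 ∂F) (Set.Ici 0) 0 := by
  have hν : 1 / 2 ≤ (k : ℝ) / 2 := by gcongr; exact_mod_cast hk
  have hF : ∀ᵐ r ∂F, 0 ≤ r := (measure_eq_zero_iff_ae_notMem.1 hsupp).mono fun _ h => not_lt.1 h
  have hΩ : ∀ s ≥ 0, ∫ r, Omega k (s * r) ∂F = ∫ r, evenOmega (k / 2) (s * r) ∂F :=
    fun s hs => by simpa using integral_Omega_comp_mul_eq hF 1 hk hs
  have hΩ₂ : ∀ t ≥ 0, ∫ r, r ^ 2 * Omega (k + 2) (t * r) ∂F =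
      ∫ r, r ^ 2 * evenOmega (k / 2 + 1) (t * r) ∂F := fun t ht => by
    rw [integral_Omega_comp_mul_eq hF _ (by omega) ht,
      show ((k + 2 : ℕ) : ℝ) / 2 = k / 2 + 1 by push_cast; ring]
  have hderiv (u : ℝ) :
      HasDerivAt (evenOmega (k / 2)) (-(u / k) * evenOmega (k / 2 + 1) u) u := by
    simpa [show (2 : ℝ) * (k / 2) = k by ring] using
      hasDerivAt_evenOmega (ν := k / 2) (by linarith) u
  have hg := hasDerivAt_integral_comp_mul hderiv (abs_evenOmega_le_one hν)
    (continuous_evenOmega (by linarith)) (abs_evenOmega_le_one (by linarith)) hr2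
  refine ⟨fun t ht => ?_, ?_⟩
  · rw [hΩ₂ t ht.le]
    exact (hg t).congr_of_eventuallyEq ((eventually_ge_nhds ht).mono hΩ)
  · have hdw : ∀ t ∈ Ici (0 : ℝ), derivWithin (fun s => ∫ r, Omega k (s * r) ∂F) (Ici 0) t =
        -(t / k) * ∫ r, r ^ 2 * evenOmega (k / 2 + 1) (t * r) ∂F := fun t ht =>
      ((hg t).hasDerivWithinAt.congr hΩ (hΩ t ht)).derivWithin (uniqueDiffOn_Ici 0 t ht)
    have h0 := hasDerivAt_neg_div_mul_integral_sq_mul_comp_mul (c := k)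
      (v := evenOmega (k / 2 + 1)) (continuous_evenOmega (by linarith))
      (abs_evenOmega_le_one (by linarith)) hr2
    simp only [evenOmega_zero (by linarith : (0 : ℝ) < k / 2 + 1), mul_one] at h0
    exact h0.hasDerivWithinAt.congr hdw (hdw 0 self_mem_Ici)
end
end

section
/- For all integers d ≥ 6 and all nonnegative integers i, the quantity χ_i := C_{i+1}^{(d-3)/2}(1) · C_1^{(d-5)/2}(1) − C_{i+2}^{(d-5)/2}(1) satisfies χ_i = (d-5)Γ(i+d-1)(i+1) / (Γ(d-3)(i+d-3)Γ(i+3)) and in particular χ_i ≥ 0. -/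
open MeasureTheory Filter

noncomputable section

/-- Gegenbauer (ultraspherical) polynomial `C_n^lam`, defined via the standard recurrence
equivalent to the generating function `(1 - 2xt + t²)^{-lam} = ∑ C_n^lam(x) t^n`. -/
def gegenbauer (lam : ℝ) : ℕ → ℝ → ℝ
  | 0 => fun _ => 1
  | 1 => fun x => 2 * lam * x
  | (n + 2) => fun x =>
      (2 * x * ((n : ℝ) + 1 + lam) * gegenbauer lam (n + 1) x
        - ((n : ℝ) + 2 * lam) * gegenbauer lam n x) / ((n : ℝ) + 2)

lemma geg_succ (lam : ℝ) (n : ℕ) :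
    gegenbauer lam (n + 1) 1 = (((n : ℝ) + 2 * lam) / ((n : ℝ) + 1)) * gegenbauer lam n 1 := by
  induction n with
  | zero => simp [gegenbauer]
  | succ n ih =>
      show (2 * 1 * ((n : ℝ) + 1 + lam) * gegenbauer lam (n + 1) 1
        - ((n : ℝ) + 2 * lam) * gegenbauer lam n 1) / ((n : ℝ) + 2) = _
      rw [ih]
      have h1 : (n : ℝ) + 1 ≠ 0 := by positivity
      have h2 : (n : ℝ) + 2 ≠ 0 := by positivity
      push_cast
      field_simp
      ring

lemma geg_one (lam : ℝ) (hl : 0 < lam) (n : ℕ) :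
    gegenbauer lam n 1 = Real.Gamma ((n : ℝ) + 2 * lam)
      / (Real.Gamma ((n : ℝ) + 1) * Real.Gamma (2 * lam)) := by
  induction n with
  | zero =>
      simp only [Nat.cast_zero, zero_add, gegenbauer, Real.Gamma_one, one_mul]
      rw [div_self (ne_of_gt (Real.Gamma_pos_of_pos (by positivity)))]
  | succ n ih =>
      rw [geg_succ, ih]
      have h1 : (0 : ℝ) < (n : ℝ) + 2 * lam := by positivity
      have h2 : (0 : ℝ) < (n : ℝ) + 1 := by positivity
      have e1 : ((n + 1 : ℕ) : ℝ) + 2 * lam = ((n : ℝ) + 2 * lam) + 1 := by push_cast; ring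
      have e2 : ((n + 1 : ℕ) : ℝ) + 1 = ((n : ℝ) + 1) + 1 := by push_cast; ring
      rw [e1, e2, Real.Gamma_add_one (ne_of_gt h1), Real.Gamma_add_one (ne_of_gt h2)]
      have hg1 : Real.Gamma ((n : ℝ) + 1) ≠ 0 := ne_of_gt (Real.Gamma_pos_of_pos h2)
      have hg2 : Real.Gamma (2 * lam) ≠ 0 := ne_of_gt (Real.Gamma_pos_of_pos (by positivity))
      field_simp

theorem chi_formula (d : ℕ) (hd : 6 ≤ d) (i : ℕ) :
    gegenbauer (((d : ℝ) - 3) / 2) (i + 1) 1 * gegenbauer (((d : ℝ) - 5) / 2) 1 1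
        - gegenbauer (((d : ℝ) - 5) / 2) (i + 2) 1
      = ((d : ℝ) - 5) * Real.Gamma ((i : ℝ) + (d : ℝ) - 1) * ((i : ℝ) + 1)
          / (Real.Gamma ((d : ℝ) - 3) * ((i : ℝ) + (d : ℝ) - 3) * Real.Gamma ((i : ℝ) + 3)) ∧
    0 ≤ gegenbauer (((d : ℝ) - 3) / 2) (i + 1) 1 * gegenbauer (((d : ℝ) - 5) / 2) 1 1
        - gegenbauer (((d : ℝ) - 5) / 2) (i + 2) 1 := by
  have hD : (6 : ℝ) ≤ (d : ℝ) := by exact_mod_cast hd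
  set D := (d : ℝ) with hDdef
  have hl1 : (0 : ℝ) < (D - 3) / 2 := by linarith
  have hl2 : (0 : ℝ) < (D - 5) / 2 := by linarith
  have e1 : 2 * ((D - 3) / 2) = D - 3 := by ring
  have e2 : 2 * ((D - 5) / 2) = D - 5 := by ring
  have hA := geg_one _ hl1 (i + 1)
  have hB := geg_one _ hl2 (i + 2)
  have hC : gegenbauer ((D - 5) / 2) 1 1 = D - 5 := by simp [gegenbauer]; ring
  rw [e1] at hA
  rw [e2] at hB
  -- positivity facts
  have hi0 : (0 : ℝ) ≤ (i : ℝ) := Nat.cast_nonneg i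
  have p1 : (0 : ℝ) < (i : ℝ) + D - 3 := by linarith
  have p2 : (0 : ℝ) < (i : ℝ) + D - 2 := by linarith
  have p3 : (0 : ℝ) < D - 5 := by linarith
  have p4 : (0 : ℝ) < D - 4 := by linarith
  have p5 : (0 : ℝ) < (i : ℝ) + 1 := by positivity
  have p6 : (0 : ℝ) < (i : ℝ) + 2 := by positivity
  have gpos : ∀ x : ℝ, 0 < x → 0 < Real.Gamma x := fun x hx => Real.Gamma_pos_of_pos hx
  have gid3 : Real.Gamma ((i : ℝ) + D - 1) = ((i : ℝ) + D - 2) * (((i : ℝ) + D - 3) * Real.Gamma ((i : ℝ) + D - 3)) := by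
    rw [show (i : ℝ) + D - 1 = ((i : ℝ) + D - 2) + 1 by ring,
      Real.Gamma_add_one (ne_of_gt p2),
      show (i : ℝ) + D - 2 = ((i : ℝ) + D - 3) + 1 by ring,
      Real.Gamma_add_one (ne_of_gt p1)]
  have gidD : Real.Gamma (D - 3) = (D - 4) * ((D - 5) * Real.Gamma (D - 5)) := by
    rw [show D - 3 = (D - 4) + 1 by ring, Real.Gamma_add_one (ne_of_gt p4),
      show D - 4 = (D - 5) + 1 by ring, Real.Gamma_add_one (ne_of_gt p3)]
  have gidi3 : Real.Gamma ((i : ℝ) + 3) = ((i : ℝ) + 2) * Real.Gamma ((i : ℝ) + 2) := by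
    rw [show (i : ℝ) + 3 = ((i : ℝ) + 2) + 1 by ring, Real.Gamma_add_one (ne_of_gt p6)]
  have eA : ((i + 1 : ℕ) : ℝ) + (D - 3) = (i : ℝ) + D - 2 := by push_cast; ring
  have eA' : ((i + 1 : ℕ) : ℝ) + 1 = (i : ℝ) + 2 := by push_cast; ring
  have eB : ((i + 2 : ℕ) : ℝ) + (D - 5) = (i : ℝ) + D - 3 := by push_cast; ring
  have eB' : ((i + 2 : ℕ) : ℝ) + 1 = (i : ℝ) + 3 := by push_cast; ring
  rw [eA, eA'] at hA
  rw [eB, eB'] at hB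
  have key : gegenbauer ((D - 3) / 2) (i + 1) 1 * gegenbauer ((D - 5) / 2) 1 1
        - gegenbauer ((D - 5) / 2) (i + 2) 1
      = (D - 5) * Real.Gamma ((i : ℝ) + D - 1) * ((i : ℝ) + 1)
          / (Real.Gamma (D - 3) * ((i : ℝ) + D - 3) * Real.Gamma ((i : ℝ) + 3)) := by
    rw [hA, hB, hC, gid3, gidD, gidi3,
      show Real.Gamma ((i : ℝ) + D - 2) = ((i : ℝ) + D - 3) * Real.Gamma ((i : ℝ) + D - 3) by
        rw [show (i : ℝ) + D - 2 = ((i : ℝ) + D - 3) + 1 by ring,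
          Real.Gamma_add_one (ne_of_gt p1)]]
    have n1 : Real.Gamma ((i : ℝ) + 2) ≠ 0 := ne_of_gt (gpos _ p6)
    have n2 : Real.Gamma (D - 5) ≠ 0 := ne_of_gt (gpos _ p3)
    field_simp
    ring
  refine ⟨key, ?_⟩
  rw [key]
  have gp1 := gpos _ p1
  have gp2 := gpos _ p3
  have hnum : 0 ≤ (D - 5) * Real.Gamma ((i : ℝ) + D - 1) * ((i : ℝ) + 1) := by
    have := gpos _ (by linarith : (0:ℝ) < (i : ℝ) + D - 1)
    positivity
  have hden : 0 < Real.Gamma (D - 3) * ((i : ℝ) + D - 3) * Real.Gamma ((i : ℝ) + 3) := by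
    have h1 := gpos _ (by linarith : (0:ℝ) < D - 3)
    have h2 := gpos _ (by linarith : (0:ℝ) < (i : ℝ) + 3)
    positivity
  exact div_nonneg hnum (le_of_lt hden)
end
end
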